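/- Let q(t) be a classical solution in the probability simplex of the α = 1/2 system (as above). Then d/dt Σ_{n=0}^{2k} (q_n - 1/(2k+1))²·(2k+1) = -(2k+1) Σ_{n=0}^{2k-1} (1 - q_n - q_{n+1})(q_{n+1} - q_n)² ≤ 0. -/

import Mathlib

/-!
Write the equation as a conservation law `q_n' = J_n - J_{n+1}`, where
`J_n = (g(q_{n-1}) - g(q_n)) / 2` with `g(x) = x (1 - x)` is the flux across the edge between
sites `n - 1` and `n`, and vanishes at the two walls. Summation by parts turns the derivative of
`Σ (q_n - c)²` into `2 Σ J_{n+1} (q_{n+1} - q_n)`, and `g(a) - g(b) = (a - b)(1 - a - b)`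
makes each term `-(1 - q_n - q_{n+1}) (q_{n+1} - q_n)²`. Since the `q_n` are nonnegative with
total mass one, `q_n + q_{n+1} ≤ 1`, so every term is nonpositive.
-/

open Finset

theorem Finset.sum_range_succ_mul_sub_succ {R : Type*} [CommRing R] (y F : ℕ → R) (m : ℕ) :
    ∑ n ∈ range (m + 1), y n * (F n - F (n + 1))
      = y 0 * F 0 - y m * F (m + 1) + ∑ n ∈ range m, F (n + 1) * (y (n + 1) - y n) := by
  induction m with
  | zero => simp [mul_sub]
  | succ m ih => rw [sum_range_succ, ih, sum_range_succ]; ring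

theorem Finset.add_le_sum_of_nonneg {ι M : Type*} [AddCommMonoid M] [PartialOrder M]
    [IsOrderedAddMonoid M] {s : Finset ι} {f : ι → M} (hf : ∀ i ∈ s, 0 ≤ f i) {i j : ι}
    (hi : i ∈ s) (hj : j ∈ s) (hij : i ≠ j) : f i + f j ≤ ∑ l ∈ s, f l := by
  classical
  rw [← sum_pair hij]
  exact sum_le_sum_of_subset_of_nonneg (by simp [insert_subset_iff, hi, hj])
    fun l hl _ ↦ hf l hl

/-- The flux from site `n - 1` to site `n` of the chain with sites `0, …, m`; it vanishes across
the walls `n = 0` and `n = m + 1`. -/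
noncomputable def flux (m : ℕ) (x : ℕ → ℝ) (n : ℕ) : ℝ :=
  if n = 0 ∨ m < n then 0 else (x (n - 1) * (1 - x (n - 1)) - x n * (1 - x n)) / 2

section flux

variable {m : ℕ} {x : ℕ → ℝ}

@[simp] theorem flux_zero : flux m x 0 = 0 := by simp [flux]

theorem flux_of_lt {n : ℕ} (hn : m < n) : flux m x n = 0 := by simp [flux, hn]

theorem flux_of_pos_of_le {n : ℕ} (hn₀ : 0 < n) (hn : n ≤ m) :
    flux m x n = (x (n - 1) * (1 - x (n - 1)) - x n * (1 - x n)) / 2 := by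
  simp [flux, hn₀.ne', Nat.not_lt.mpr hn]

theorem sum_mul_flux_sub_flux_succ (c : ℝ) :
    ∑ n ∈ range (m + 1), 2 * (x n - c) * (flux m x n - flux m x (n + 1))
      = -∑ n ∈ range m, (1 - x n - x (n + 1)) * (x (n + 1) - x n) ^ 2 := by
  rw [sum_range_succ_mul_sub_succ, flux_zero, flux_of_lt m.lt_succ_self, ← sum_neg_distrib]
  simp only [mul_zero, sub_zero, zero_add]
  refine sum_congr rfl fun n hn ↦ ?_
  rw [flux_of_pos_of_le n.add_one_pos (mem_range.mp hn), Nat.add_sub_cancel]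
  ring

end flux

theorem sum_dissipation_nonneg {m : ℕ} {x : ℕ → ℝ} (hx : ∀ n, 0 ≤ x n)
    (hsum : ∑ n ∈ range (m + 1), x n = 1) :
    0 ≤ ∑ n ∈ range m, (1 - x n - x (n + 1)) * (x (n + 1) - x n) ^ 2 := by
  refine sum_nonneg fun n hn ↦ mul_nonneg ?_ (sq_nonneg _)
  have hn : n < m := mem_range.mp hn
  have := add_le_sum_of_nonneg (fun l _ ↦ hx l) (mem_range.mpr (by omega : n < m + 1))
    (mem_range.mpr (by omega : n + 1 < m + 1)) n.succ_ne_self.symm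
  linarith

theorem stmt16 (k : ℕ) (hk : 0 < k) (q : ℝ → ℕ → ℝ)
    (hpos : ∀ t n, 0 ≤ q t n)
    (hsum : ∀ t, ∑ n ∈ Finset.range (2*k+1), q t n = 1)
    (hode0 : ∀ t, HasDerivAt (fun s => q s 0)
      ((1/2) * (1 - q t 1) * q t 1 - (1/2) * (1 - q t 0) * q t 0) t)
    (hoden : ∀ t, ∀ n : ℕ, 0 < n → n < 2*k →
      HasDerivAt (fun s => q s n)
        ((1/2) * q t (n-1) * (1 - q t (n-1)) + (1/2) * q t (n+1) * (1 - q t (n+1))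
          - q t n * (1 - q t n)) t)
    (hode2k : ∀ t, HasDerivAt (fun s => q s (2*k))
      ((1/2) * (1 - q t (2*k-1)) * q t (2*k-1) - (1/2) * (1 - q t (2*k)) * q t (2*k)) t) :
    ∀ t : ℝ,
      HasDerivAt (fun s => ∑ n ∈ Finset.range (2*k+1),
          (q s n - 1/(2*(k:ℝ)+1))^2 * (2*(k:ℝ)+1))
        (-(2*(k:ℝ)+1) * ∑ n ∈ Finset.range (2*k),
          (1 - q t n - q t (n+1)) * (q t (n+1) - q t n)^2) t
      ∧ -(2*(k:ℝ)+1) * ∑ n ∈ Finset.range (2*k),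
          (1 - q t n - q t (n+1)) * (q t (n+1) - q t n)^2 ≤ 0 := by
  intro t
  have hq : ∀ n ∈ range (2 * k + 1),
      HasDerivAt (fun s ↦ q s n) (flux (2 * k) (q t) n - flux (2 * k) (q t) (n + 1)) t := by
    intro n hn
    rcases Nat.eq_zero_or_pos n with rfl | hn₀
    · convert hode0 t using 1
      rw [zero_add, flux_zero, flux_of_pos_of_le one_pos (by omega : 1 ≤ 2 * k), Nat.sub_self]
      ring
    rcases (Nat.lt_succ_iff.mp (mem_range.mp hn)).lt_or_eq with hn | rfl
    · convert hoden t n hn₀ hn using 1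
      rw [flux_of_pos_of_le hn₀ hn.le, flux_of_pos_of_le n.add_one_pos hn, Nat.add_sub_cancel]
      ring
    · convert hode2k t using 1
      rw [flux_of_pos_of_le hn₀ le_rfl, flux_of_lt (2 * k).lt_succ_self]
      ring
  set C : ℝ := 2 * k + 1
  have hderiv := HasDerivAt.fun_sum fun n hn ↦ (((hq n hn).sub_const (1 / C)).pow 2).mul_const C
  refine ⟨hderiv.congr_deriv ?_, ?_⟩
  · rw [← sum_mul, mul_comm, neg_mul, ← mul_neg, ← sum_mul_flux_sub_flux_succ (1 / C)]
    norm_num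
  · exact mul_nonpos_of_nonpos_of_nonneg (neg_nonpos.mpr (by positivity))
      (sum_dissipation_nonneg (hpos t) (hsum t))
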